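/- arXiv:1305.2489 — 3 statements merged into one kernel-verified Lean document; each statement's English description precedes it below -/
import Mathlib

section
/- Let λ_0(n,s) = 2^{2s} Γ(n/2) Γ(1+s) / Γ((n-2s)/2) and H(n,s) = 2^{2s} Γ((n+2s)/4)^2 / Γ((n-2s)/4)^2. For n ≥ 10 and every s ∈ (0,1), λ_0(n,s) ≤ H(n,s). -/
/-!
With `x = (n - 2s)/4 ≥ 2` and `B(a, b) = Γ(a)Γ(b)/Γ(a + b)`, the inequality reads
`s B(x, s)² ≤ B(2x, s)`. Cauchy–Schwarz in Euler's integral makes `a ↦ B(a, s)` log-convex, so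
`B(x, s)² ≤ B(2, s) B(2x - 2, s)`. The recurrence `B(a + 1, s) = a/(a + s) B(a, s)` gives
`B(2, s) = 1/(s(s + 1))` and relates `B(2x, s)` to `B(2x - 2, s)`; what remains is the polynomial
inequality `(u + s)(u + 1 + s) ≤ (s + 1)u(u + 1)` for `u = 2x - 2 ≥ 2` and `s ≤ 1`.
-/

open MeasureTheory Set ProbabilityTheory

theorem sq_integral_mul_le_integral_sq_mul_integral_sq {α : Type*} [MeasurableSpace α]
    {μ : Measure α} {f g : α → ℝ} (hf : Integrable (fun x ↦ f x ^ 2) μ)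
    (hg : Integrable (fun x ↦ g x ^ 2) μ) (hfg : Integrable (fun x ↦ f x * g x) μ) :
    (∫ x, f x * g x ∂μ) ^ 2 ≤ (∫ x, f x ^ 2 ∂μ) * ∫ x, g x ^ 2 ∂μ := by
  have hquad : ∀ c : ℝ, 0 ≤ (∫ x, f x ^ 2 ∂μ) * (c * c) + (-2 * ∫ x, f x * g x ∂μ) * c
      + ∫ x, g x ^ 2 ∂μ := by
    intro c
    have h : 0 ≤ ∫ x, (c * f x - g x) ^ 2 ∂μ := integral_nonneg fun x ↦ sq_nonneg _
    have hexp : (fun x ↦ (c * f x - g x) ^ 2)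
        = fun x ↦ (c * c) * f x ^ 2 + (-2 * c) * (f x * g x) + g x ^ 2 := by
      funext x; ring
    have hfirst : Integrable (fun x ↦ (c * c) * f x ^ 2 + (-2 * c) * (f x * g x)) μ :=
      (hf.const_mul _).add (hfg.const_mul _)
    rw [hexp, integral_add hfirst hg,
      integral_add (hf.const_mul _) (hfg.const_mul _), integral_const_mul,
      integral_const_mul] at h
    linarith
  have hdisc := discrim_le_zero hquad
  rw [discrim] at hdisc
  nlinarith

theorem ofReal_rpow_mul_one_sub_rpow {a b t : ℝ} (ht₀ : 0 ≤ t) (ht₁ : t ≤ 1) :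
    ((t ^ (a - 1) * (1 - t) ^ (b - 1) : ℝ) : ℂ)
      = (t : ℂ) ^ ((a : ℂ) - 1) * (1 - (t : ℂ)) ^ ((b : ℂ) - 1) := by
  rw [Complex.ofReal_mul, Complex.ofReal_cpow ht₀, Complex.ofReal_cpow (sub_nonneg.2 ht₁)]
  push_cast
  rfl

theorem integrableOn_rpow_mul_one_sub_rpow {a b : ℝ} (ha : 0 < a) (hb : 0 < b) :
    IntegrableOn (fun t : ℝ ↦ t ^ (a - 1) * (1 - t) ^ (b - 1)) (Ioc 0 1) := by
  have h := (intervalIntegrable_iff_integrableOn_Ioc_of_le zero_le_one).1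
    (Complex.betaIntegral_convergent (u := a) (v := b) (by simpa) (by simpa))
  refine IntegrableOn.congr_fun (Integrable.re h) (fun t ht ↦ ?_) measurableSet_Ioc
  rw [← ofReal_rpow_mul_one_sub_rpow ht.1.le ht.2]
  exact Complex.ofReal_re _

theorem beta_eq_setIntegral {a b : ℝ} (ha : 0 < a) (hb : 0 < b) :
    beta a b = ∫ t in Ioc 0 1, t ^ (a - 1) * (1 - t) ^ (b - 1) := by
  rw [beta_eq_betaIntegralReal a b ha hb, Complex.betaIntegral,
    intervalIntegral.integral_of_le zero_le_one,
    ← setIntegral_congr_fun measurableSet_Ioc fun t ht ↦ ofReal_rpow_mul_one_sub_rpow ht.1.le ht.2,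
    integral_complex_ofReal, Complex.ofReal_re]

theorem beta_add_one {a b : ℝ} (ha : a ≠ 0) (hab : a + b ≠ 0) :
    beta (a + 1) b = a / (a + b) * beta a b := by
  rw [beta, beta, Real.Gamma_add_one ha, add_right_comm, Real.Gamma_add_one hab]
  field_simp

theorem beta_one_left {b : ℝ} (hb : 0 < b) : beta 1 b = 1 / b := by
  rw [beta, Real.Gamma_one, add_comm, Real.Gamma_add_one hb.ne']
  field_simp [(Real.Gamma_pos_of_pos hb).ne']

theorem rpow_div_two_sq {x : ℝ} (hx : 0 ≤ x) (c : ℝ) : (x ^ (c / 2)) ^ 2 = x ^ c := by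
  rw [← Real.rpow_mul_natCast hx]
  norm_num

theorem beta_midpoint_sq_le {p q b : ℝ} (hp : 0 < p) (hq : 0 < q) (hb : 0 < b) :
    beta ((p + q) / 2) b ^ 2 ≤ beta p b * beta q b := by
  set f : ℝ → ℝ := fun t ↦ t ^ ((p - 1) / 2) * (1 - t) ^ ((b - 1) / 2)
  set g : ℝ → ℝ := fun t ↦ t ^ ((q - 1) / 2) * (1 - t) ^ ((b - 1) / 2)
  have hf : ∀ t ∈ Ioc (0 : ℝ) 1, t ^ (p - 1) * (1 - t) ^ (b - 1) = f t ^ 2 := fun t ht ↦ by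
    rw [mul_pow, rpow_div_two_sq ht.1.le, rpow_div_two_sq (sub_nonneg.2 ht.2)]
  have hg : ∀ t ∈ Ioc (0 : ℝ) 1, t ^ (q - 1) * (1 - t) ^ (b - 1) = g t ^ 2 := fun t ht ↦ by
    rw [mul_pow, rpow_div_two_sq ht.1.le, rpow_div_two_sq (sub_nonneg.2 ht.2)]
  have hfg : ∀ t ∈ Ioc (0 : ℝ) 1,
      t ^ ((p + q) / 2 - 1) * (1 - t) ^ (b - 1) = f t * g t := fun t ht ↦ by
    rw [← rpow_div_two_sq (sub_nonneg.2 ht.2),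
      show (p + q) / 2 - 1 = (p - 1) / 2 + (q - 1) / 2 by ring, Real.rpow_add ht.1]
    ring
  have hm : 0 < (p + q) / 2 := by positivity
  rw [beta_eq_setIntegral hp hb, beta_eq_setIntegral hq hb, beta_eq_setIntegral hm hb,
    setIntegral_congr_fun measurableSet_Ioc hf, setIntegral_congr_fun measurableSet_Ioc hg,
    setIntegral_congr_fun measurableSet_Ioc hfg]
  exact sq_integral_mul_le_integral_sq_mul_integral_sq
    ((integrableOn_rpow_mul_one_sub_rpow hp hb).congr_fun hf measurableSet_Ioc)
    ((integrableOn_rpow_mul_one_sub_rpow hq hb).congr_fun hg measurableSet_Ioc)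
    ((integrableOn_rpow_mul_one_sub_rpow hm hb).congr_fun hfg measurableSet_Ioc)

theorem mul_beta_sq_le_beta_two_mul {x s : ℝ} (hx : 2 ≤ x) (hs : 0 < s) (hs₁ : s ≤ 1) :
    s * beta x s ^ 2 ≤ beta (2 * x) s := by
  set u := 2 * x - 2
  have hu : 2 ≤ u := by linarith
  have hlog : beta x s ^ 2 ≤ beta 2 s * beta u s := by
    simpa [u, show (2 + (2 * x - 2)) / 2 = x by ring] using
      beta_midpoint_sq_le two_pos (by linarith : 0 < u) hs
  have htwo : beta 2 s = 1 / (s * (s + 1)) := by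
    rw [show (2 : ℝ) = 1 + 1 by norm_num, beta_add_one one_ne_zero (by positivity), beta_one_left hs]
    field_simp
    ring
  have hshift : (u + s) * (u + 1 + s) * beta (2 * x) s = u * (u + 1) * beta u s := by
    rw [show 2 * x = u + 1 + 1 by ring, beta_add_one (by positivity) (by positivity),
      beta_add_one (by positivity) (by positivity)]
    field_simp
  -- the difference of the two sides is `s ((u - 2)(u + 1) + 1 - s)`
  have hfactor : (u + s) * (u + 1 + s) ≤ (s + 1) * (u * (u + 1)) := by
    nlinarith [mul_nonneg hs.le (add_nonneg (mul_nonneg (by linarith : 0 ≤ u - 2)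
      (by linarith : 0 ≤ u + 1)) (by linarith : 0 ≤ 1 - s))]
  have hpos : 0 < beta (2 * x) s := beta_pos (by linarith) hs
  calc s * beta x s ^ 2 ≤ s * (beta 2 s * beta u s) := by gcongr
    _ = beta u s / (s + 1) := by rw [htwo]; field_simp
    _ ≤ beta (2 * x) s := by
      rw [div_le_iff₀ (by positivity)]
      have : 0 < u * (u + 1) := by positivity
      nlinarith [mul_le_mul_of_nonneg_right hfactor hpos.le]

theorem Gamma_two_mul_add_mul_Gamma_one_add_div_le {x s : ℝ} (hx : 2 ≤ x) (hs : 0 < s)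
    (hs₁ : s ≤ 1) :
    Real.Gamma (2 * x + s) * Real.Gamma (1 + s) / Real.Gamma (2 * x)
      ≤ Real.Gamma (x + s) ^ 2 / Real.Gamma x ^ 2 := by
  have h := mul_beta_sq_le_beta_two_mul hx hs hs₁
  have hΓs := Real.Gamma_pos_of_pos hs
  rw [beta, beta, div_pow, mul_div_assoc', div_le_div_iff₀ (by positivity)
    (Real.Gamma_pos_of_pos (by linarith))] at h
  rw [div_le_div_iff₀ (Real.Gamma_pos_of_pos (by linarith)) (by positivity), add_comm 1 s,
    Real.Gamma_add_one hs.ne']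
  refine le_of_mul_le_mul_left ?_ hΓs
  calc Real.Gamma s * (Real.Gamma (2 * x + s) * (s * Real.Gamma s) * Real.Gamma x ^ 2)
      = s * (Real.Gamma x * Real.Gamma s) ^ 2 * Real.Gamma (2 * x + s) := by ring
    _ ≤ Real.Gamma (2 * x) * Real.Gamma s * Real.Gamma (x + s) ^ 2 := h
    _ = Real.Gamma s * (Real.Gamma (x + s) ^ 2 * Real.Gamma (2 * x)) := by ring

theorem singular_solution_semistable_high_dim
    (n : ℕ) (hn : 10 ≤ n) (s : ℝ) (hs : 0 < s) (hs1 : s < 1) :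
    2 ^ (2 * s) * Real.Gamma ((n : ℝ) / 2) * Real.Gamma (1 + s) / Real.Gamma (((n : ℝ) - 2 * s) / 2)
      ≤ 2 ^ (2 * s) * Real.Gamma (((n : ℝ) + 2 * s) / 4) ^ 2 / Real.Gamma (((n : ℝ) - 2 * s) / 4) ^ 2 := by
  have hn' : (10 : ℝ) ≤ n := by exact_mod_cast hn
  set x := ((n : ℝ) - 2 * s) / 4 with hx_def
  have hx : 2 ≤ x := by rw [hx_def]; linarith
  rw [show (n : ℝ) / 2 = 2 * x + s by ring, show ((n : ℝ) - 2 * s) / 2 = 2 * x by ring,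
    show ((n : ℝ) + 2 * s) / 4 = x + s by ring, mul_assoc, mul_div_assoc,
    mul_div_assoc (2 ^ (2 * s))]
  exact mul_le_mul_of_nonneg_left (Gamma_two_mul_add_mul_Gamma_one_add_div_le hx hs hs1.le)
    (by positivity)
end

section
/- Let s ∈ (0,1), n ≥ 1, and u_0(x) = (1 − |x|^2)_+^s on ℝ^n. Then for p sufficiently large, u_0 does not belong to the fractional Sobolev space W^{2s,p}(B_1) when 2s ≠ 1; in particular, for s = 1/2, u_0(x) = (1−|x|^2)_+^{1/2} satisfies ∫_{B_1} |∇u_0|^p dx = ∞ for every p ≥ 2. -/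
/-!
In polar coordinates the integral becomes `σ(S^{n-1}) ∫₀¹ r^(n-1) (r / √(1 - r²))^p dr`.
Near `r = 1` the base `r / √(1 - r²)` exceeds `1`, so its `p`-th power dominates its square
`r² / (1 - r²) ≥ 1 / (4 (1 - r))`, and `1 / (1 - r)` is not integrable at `1`.
-/

open MeasureTheory Set Metric
open scoped ENNReal

lemma lintegral_Ioo_inv_sub_eq_top {a b : ℝ} (hab : a < b) :
    ∫⁻ r in Ioo a b, ENNReal.ofReal (b - r)⁻¹ = ⊤ := by
  by_contra h
  have hint : IntegrableOn (fun r ↦ (b - r)⁻¹) (Ioo a b) := by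
    refine (lintegral_ofReal_ne_top_iff_integrable (by fun_prop) ?_).1 h
    filter_upwards [ae_restrict_mem measurableSet_Ioo] with r hr
    exact inv_nonneg.2 (sub_nonneg.2 hr.2.le)
  have : IntervalIntegrable (fun r ↦ (r - b)⁻¹) volume a b := by
    rw [intervalIntegrable_iff_integrableOn_Ioo_of_le hab.le]
    exact hint.neg.congr_fun (fun r _ ↦ by rw [Pi.neg_apply, ← inv_neg, neg_sub])
      measurableSet_Ioo
  simp [intervalIntegrable_sub_inv_iff, hab.ne] at this

lemma inv_one_sub_le_four_mul_rpow_div_sqrt {r p : ℝ} (hr : 3 / 4 ≤ r) (hr₁ : r < 1)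
    (hp : 2 ≤ p) : (1 - r)⁻¹ ≤ 4 * (r / √(1 - r ^ 2)) ^ p := by
  have h₀ : 0 < 1 - r ^ 2 := by nlinarith
  have h₁ : 1 ≤ r / √(1 - r ^ 2) := by
    rw [one_le_div (Real.sqrt_pos.2 h₀), Real.sqrt_le_iff]
    constructor <;> nlinarith
  calc (1 - r)⁻¹ ≤ 4 * (r ^ 2 / (1 - r ^ 2)) := by
        rw [mul_div_assoc', inv_eq_one_div, div_le_div_iff₀ (by linarith) h₀]
        nlinarith
    _ = 4 * (r / √(1 - r ^ 2)) ^ (2 : ℝ) := by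
        rw [Real.rpow_two, div_pow, Real.sq_sqrt h₀.le]
    _ ≤ 4 * (r / √(1 - r ^ 2)) ^ p := by gcongr

lemma lintegral_Ioo_pow_mul_rpow_div_sqrt_eq_top (k : ℕ) {p : ℝ} (hp : 2 ≤ p) :
    ∫⁻ r in Ioo 0 1, ENNReal.ofReal (r ^ k) * ENNReal.ofReal ((r / √(1 - r ^ 2)) ^ p) = ⊤ := by
  set c : ℝ := (3 / 4) ^ k / 4
  have hbound : ∀ r ∈ Ioo (3 / 4 : ℝ) 1, ENNReal.ofReal c * ENNReal.ofReal (1 - r)⁻¹ ≤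
      ENNReal.ofReal (r ^ k) * ENNReal.ofReal ((r / √(1 - r ^ 2)) ^ p) := by
    rintro r ⟨hr, hr₁⟩
    rw [← ENNReal.ofReal_mul (by positivity), ← ENNReal.ofReal_mul (by positivity)]
    refine ENNReal.ofReal_le_ofReal ?_
    calc c * (1 - r)⁻¹ ≤ c * (4 * (r / √(1 - r ^ 2)) ^ p) := by
          gcongr
          exact inv_one_sub_le_four_mul_rpow_div_sqrt hr.le hr₁ hp
      _ = (3 / 4) ^ k * (r / √(1 - r ^ 2)) ^ p := by ring
      _ ≤ r ^ k * (r / √(1 - r ^ 2)) ^ p := by gcongr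
  refine eq_top_iff.2 ?_
  calc ⊤ = ENNReal.ofReal c * ∫⁻ r in Ioo (3 / 4) 1, ENNReal.ofReal (1 - r)⁻¹ := by
        rw [lintegral_Ioo_inv_sub_eq_top (by norm_num), ENNReal.mul_top (by positivity)]
    _ = ∫⁻ r in Ioo (3 / 4) 1, ENNReal.ofReal c * ENNReal.ofReal (1 - r)⁻¹ :=
        (lintegral_const_mul' _ _ ENNReal.ofReal_ne_top).symm
    _ ≤ ∫⁻ r in Ioo (3 / 4) 1, ENNReal.ofReal (r ^ k) * ENNReal.ofReal ((r / √(1 - r ^ 2)) ^ p) :=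
        setLIntegral_mono' measurableSet_Ioo hbound
    _ ≤ _ := lintegral_mono_set (Ioo_subset_Ioo_left (by norm_num))

section Polar

variable {E : Type*} [NormedAddCommGroup E] [NormedSpace ℝ E] [FiniteDimensional ℝ E]
  [Nontrivial E] [MeasurableSpace E] [BorelSpace E] (μ : Measure E) [μ.IsAddHaarMeasure]

lemma lintegral_fun_norm_addHaar {f : ℝ → ℝ≥0∞} (hf : Measurable f) :
    ∫⁻ x, f ‖x‖ ∂μ = μ.toSphere univ *
      ∫⁻ r in Ioi 0, ENNReal.ofReal (r ^ (Module.finrank ℝ E - 1)) * f r := by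
  calc ∫⁻ x, f ‖x‖ ∂μ = ∫⁻ x : ({0}ᶜ : Set E), f ‖x.1‖ ∂(μ.comap (↑)) := by
        rw [lintegral_subtype_comap (measurableSet_singleton _).compl (fun x ↦ f ‖x‖),
          restrict_compl_singleton]
    _ = ∫⁻ x, f x.2 ∂μ.toSphere.prod (.volumeIoiPow (Module.finrank ℝ E - 1)) := by
        simpa using (μ.measurePreserving_homeomorphUnitSphereProd.lintegral_comp_emb
          (Homeomorph.measurableEmbedding _) (f ∘ Subtype.val ∘ Prod.snd))
    _ = μ.toSphere univ * ∫⁻ r, f r ∂.volumeIoiPow (Module.finrank ℝ E - 1) := by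
        rw [lintegral_prod (fun z : sphere (0 : E) 1 × Ioi (0 : ℝ) ↦ f z.2)
          (hf.comp (measurable_subtype_coe.comp measurable_snd)).aemeasurable]
        dsimp only
        rw [lintegral_const, mul_comm]
    _ = _ := by
        rw [Measure.volumeIoiPow, lintegral_withDensity_eq_lintegral_mul _
          (measurable_subtype_coe.pow_const _).ennreal_ofReal
          (by fun_prop : Measurable fun r : Ioi (0 : ℝ) ↦ f r)]
        exact congrArg _
          (lintegral_subtype_comap measurableSet_Ioi fun r ↦ ENNReal.ofReal (r ^ _) * f r)

lemma setLIntegral_ball_fun_norm_addHaar {f : ℝ → ℝ≥0∞} (hf : Measurable f) (R : ℝ) :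
    ∫⁻ x in ball 0 R, f ‖x‖ ∂μ = μ.toSphere univ *
      ∫⁻ r in Ioo 0 R, ENNReal.ofReal (r ^ (Module.finrank ℝ E - 1)) * f r := by
  calc ∫⁻ x in ball 0 R, f ‖x‖ ∂μ = ∫⁻ x, (Iio R).indicator f ‖x‖ ∂μ := by
        rw [← lintegral_indicator measurableSet_ball]
        congr with x
        simp [indicator]
    _ = _ := lintegral_fun_norm_addHaar μ (hf.indicator measurableSet_Iio)
    _ = _ := by
        rw [← Iio_inter_Ioi, ← setLIntegral_indicator measurableSet_Iio]
        simp_rw [indicator_mul_right]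

end Polar

theorem grad_u0_not_Lp
    (n : ℕ) (hn : 1 ≤ n) (p : ℝ) (hp : 2 ≤ p) :
    ∫⁻ x in Metric.ball (0 : EuclideanSpace ℝ (Fin n)) 1,
        ENNReal.ofReal ((‖x‖ / Real.sqrt (1 - ‖x‖ ^ 2)) ^ p) = ⊤ := by
  have : Nonempty (Fin n) := Fin.pos_iff_nonempty.mp hn
  rw [setLIntegral_ball_fun_norm_addHaar volume
      (f := fun r ↦ ENNReal.ofReal ((r / √(1 - r ^ 2)) ^ p)) (by fun_prop),
    finrank_euclideanSpace_fin, lintegral_Ioo_pow_mul_rpow_div_sqrt_eq_top (n - 1) hp]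
  exact ENNReal.mul_top (Measure.measure_univ_ne_zero.2 (Measure.toSphere_ne_zero _))
end

section
/- Let f : [0,∞) → ℝ be C^2 and positive with f' > 0 on [0,∞), and suppose τ := lim_{t→∞} f(t)f''(t)/f'(t)^2 exists and τ < 1. Then for every ε ∈ (0, 1−τ) there exists a constant C > 0, depending only on f, τ, and ε, such that f(t) ≤ C(1+t)^{1/(1−(τ+ε))} for all t > 0. -/
/-!
Write `δ = 1 - (τ + ε)`. Since `(f / f')' = 1 - f f'' / f'²` is eventually at least `δ`, the
quotient `f / f'` eventually dominates an affine function `c + δ (t - a)` with `c > 0`. Then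
`(log f)' = f' / f ≤ 1 / (c + δ (t - a)) = ((1 / δ) log (c + δ (t - a)))'`, and integrating
gives `f t ≤ f a ((c + δ (t - a)) / c) ^ (1 / δ)`. On the compact interval `[0, a]` the continuous
function `f` is bounded.
-/

open Set Filter

theorem sub_le_sub_of_hasDerivAt_le {u v u' v' : ℝ → ℝ} {a t : ℝ}
    (hu : ∀ s ∈ Ici a, HasDerivAt u (u' s) s) (hv : ∀ s ∈ Ici a, HasDerivAt v (v' s) s)
    (huv : ∀ s ∈ Ioi a, u' s ≤ v' s) (ht : a ≤ t) : u t - u a ≤ v t - v a := by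
  have hmono : MonotoneOn (fun s => v s - u s) (Ici a) := by
    refine monotoneOn_of_hasDerivWithinAt_nonneg (convex_Ici a) (f' := fun s => v' s - u' s)
      (fun s hs => ((hv s hs).sub (hu s hs)).continuousAt.continuousWithinAt) ?_ ?_
    · rw [interior_Ici]
      exact fun s hs =>
        ((hv s (Ioi_subset_Ici_self hs)).sub (hu s (Ioi_subset_Ici_self hs))).hasDerivWithinAt
    · rw [interior_Ici]
      exact fun s hs => sub_nonneg.2 (huv s hs)
  have := hmono self_mem_Ici (mem_Ici.2 ht) ht
  linarith

theorem hasDerivAt_div_deriv {f f' : ℝ → ℝ} {f'' x : ℝ} (hf : HasDerivAt f (f' x) x)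
    (hf' : HasDerivAt f' f'' x) (h : f' x ≠ 0) :
    HasDerivAt (fun t => f t / f' t) (1 - f x * f'' / f' x ^ 2) x := by
  refine (hf.div hf' h).congr_deriv ?_
  field_simp

theorem add_mul_sub_le_div_deriv {f f' f'' : ℝ → ℝ} {a δ t : ℝ}
    (hf'pos : ∀ s ∈ Ici a, 0 < f' s) (hf : ∀ s ∈ Ici a, HasDerivAt f (f' s) s)
    (hf' : ∀ s ∈ Ici a, HasDerivAt f' (f'' s) s)
    (hratio : ∀ s ∈ Ioi a, f s * f'' s / f' s ^ 2 ≤ 1 - δ) (ht : a ≤ t) :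
    f a / f' a + δ * (t - a) ≤ f t / f' t := by
  have hlin : ∀ s ∈ Ici a, HasDerivAt (fun s => δ * s) δ s := fun s _ => by
    simpa using (hasDerivAt_id s).const_mul δ
  have := sub_le_sub_of_hasDerivAt_le hlin
    (fun s hs => hasDerivAt_div_deriv (hf s hs) (hf' s hs) (hf'pos s hs).ne')
    (fun s hs => by linarith [hratio s hs]) ht
  linarith

theorem le_mul_rpow_of_deriv_mul_le {f f' : ℝ → ℝ} {a c δ t : ℝ}
    (hfpos : ∀ s ∈ Ici a, 0 < f s) (hf : ∀ s ∈ Ici a, HasDerivAt f (f' s) s)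
    (hc : 0 < c) (hδ : 0 < δ) (hle : ∀ s ∈ Ioi a, f' s * (c + δ * (s - a)) ≤ f s)
    (ht : a ≤ t) :
    f t ≤ f a * ((c + δ * (t - a)) / c) ^ (1 / δ) := by
  have hL : ∀ s ∈ Ici a, 0 < c + δ * (s - a) := fun s hs => by
    nlinarith [mem_Ici.1 hs]
  have hlogL : ∀ s ∈ Ici a, HasDerivAt (fun s => 1 / δ * Real.log (c + δ * (s - a)))
      (1 / (c + δ * (s - a))) s := fun s hs => by
    have h := ((((hasDerivAt_id s).sub_const a).const_mul δ).const_add c).log (hL s hs).ne'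
    refine (h.const_mul (1 / δ)).congr_deriv ?_
    field_simp
    rfl
  have hlog := sub_le_sub_of_hasDerivAt_le
    (fun s hs => (hf s hs).log (hfpos s hs).ne') hlogL (fun s hs => by
      rw [div_le_div_iff₀ (hfpos s (Ioi_subset_Ici_self hs)) (hL s (Ioi_subset_Ici_self hs))]
      linarith [hle s hs]) ht
  have hfa := hfpos a self_mem_Ici
  have hq : 0 < (c + δ * (t - a)) / c := div_pos (hL t (mem_Ici.2 ht)) hc
  rw [← div_le_iff₀' hfa, ← Real.log_le_log_iff (div_pos (hfpos t (mem_Ici.2 ht)) hfa)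
    (Real.rpow_pos_of_pos hq _), Real.log_div (hfpos t (mem_Ici.2 ht)).ne' hfa.ne',
    Real.log_rpow hq, Real.log_div (hL t (mem_Ici.2 ht)).ne' hc.ne']
  simp only [sub_self, mul_zero, add_zero] at hlog
  linear_combination hlog

theorem exists_pos_le_mul_one_add_rpow_of_eventually {f : ℝ → ℝ} {a C p : ℝ}
    (hcont : ContinuousOn f (Icc 0 a)) (hp : 0 ≤ p)
    (hbound : ∀ t ≥ a, f t ≤ C * (1 + t) ^ p) :
    ∃ C' : ℝ, 0 < C' ∧ ∀ t : ℝ, 0 ≤ t → f t ≤ C' * (1 + t) ^ p := by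
  obtain ⟨M, hM⟩ := isCompact_Icc.bddAbove_image hcont
  refine ⟨|C| + |M| + 1, by positivity, fun t ht => ?_⟩
  have hone : 1 ≤ (1 + t) ^ p := Real.one_le_rpow (by linarith) hp
  rcases le_or_gt a t with hat | hta
  · calc f t ≤ C * (1 + t) ^ p := hbound t hat
      _ ≤ (|C| + |M| + 1) * (1 + t) ^ p := by
        gcongr
        linarith [le_abs_self C, abs_nonneg M]
  · calc f t ≤ M := hM (mem_image_of_mem f ⟨ht, hta.le⟩)
      _ ≤ |C| + |M| + 1 := by linarith [le_abs_self M, abs_nonneg C]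
      _ ≤ (|C| + |M| + 1) * (1 + t) ^ p := le_mul_of_one_le_right (by positivity) hone

theorem power_growth_of_tau_lt_one_general
    (f f' f'' : ℝ → ℝ) (τ : ℝ)
    (hfpos : ∀ t ∈ Ici (0 : ℝ), 0 < f t)
    (hf'pos : ∀ t ∈ Ici (0 : ℝ), 0 < f' t)
    (hf : ∀ t ∈ Ici (0 : ℝ), HasDerivAt f (f' t) t)
    (hf' : ∀ t ∈ Ici (0 : ℝ), HasDerivAt f' (f'' t) t)
    (hτ : Tendsto (fun t => f t * f'' t / (f' t) ^ 2) atTop (nhds τ))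
    (ε : ℝ) (hε : 0 < ε) (hε1 : ε < 1 - τ) :
    ∃ C : ℝ, 0 < C ∧ ∀ t : ℝ, 0 < t → f t ≤ C * (1 + t) ^ (1 / (1 - (τ + ε))) := by
  set δ := 1 - (τ + ε)
  have hδ : 0 < δ := by linarith
  obtain ⟨a₀, ha₀⟩ := eventually_atTop.1 (hτ.eventually_le_const (by linarith : τ < 1 - δ))
  set a := max a₀ 0
  have hIci : Ici a ⊆ Ici 0 := Ici_subset_Ici.2 (le_max_right _ _)
  set c := f a / f' a
  have hc : 0 < c := div_pos (hfpos a (hIci self_mem_Ici)) (hf'pos a (hIci self_mem_Ici))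
  have hpow (t : ℝ) (ht : a ≤ t) : f t ≤ f a * ((c + δ * (t - a)) / c) ^ (1 / δ) := by
    refine le_mul_rpow_of_deriv_mul_le (fun s hs => hfpos s (hIci hs))
      (fun s hs => hf s (hIci hs)) hc hδ (fun s hs => ?_) ht
    have hs0 : s ∈ Ici 0 := hIci (Ioi_subset_Ici_self hs)
    rw [← le_div_iff₀' (hf'pos s hs0)]
    exact add_mul_sub_le_div_deriv (fun s hs => hf'pos s (hIci hs)) (fun s hs => hf s (hIci hs))
      (fun s hs => hf' s (hIci hs)) (fun s hs => ha₀ s (le_max_left _ _ |>.trans hs.le)) hs.le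
  obtain ⟨C, hC, hCbound⟩ := exists_pos_le_mul_one_add_rpow_of_eventually
    (C := f a * ((c + δ) / c) ^ (1 / δ)) (p := 1 / δ)
    (fun t ht => (hf t ht.1).continuousAt.continuousWithinAt) (by positivity) fun t ht => by
      have ha : 0 ≤ a := le_max_right _ _
      have hfa := hfpos a (hIci self_mem_Ici)
      calc f t ≤ f a * ((c + δ * (t - a)) / c) ^ (1 / δ) := hpow t ht
        _ ≤ f a * ((c + δ) / c * (1 + t)) ^ (1 / δ) := by
          gcongr
          rw [div_mul_eq_mul_div]
          gcongr
          nlinarith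
        _ = f a * ((c + δ) / c) ^ (1 / δ) * (1 + t) ^ (1 / δ) := by
          rw [Real.mul_rpow (by positivity) (by linarith), mul_assoc]
  exact ⟨C, hC, fun t ht => hCbound t ht.le⟩

theorem power_growth_of_tau_lt_one
    (f f' f'' : ℝ → ℝ) (τ : ℝ)
    (hfpos : ∀ t ∈ Ici (0 : ℝ), 0 < f t)
    (hf'pos : ∀ t ∈ Ici (0 : ℝ), 0 < f' t)
    (hf : ∀ t ∈ Ici (0 : ℝ), HasDerivAt f (f' t) t)
    (hf' : ∀ t ∈ Ici (0 : ℝ), HasDerivAt f' (f'' t) t)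
    (hf''cont : ContinuousOn f'' (Ici 0))
    (hτ : Tendsto (fun t => f t * f'' t / (f' t) ^ 2) atTop (nhds τ))
    (hτ1 : τ < 1)
    (ε : ℝ) (hε : 0 < ε) (hε1 : ε < 1 - τ) :
    ∃ C : ℝ, 0 < C ∧ ∀ t : ℝ, 0 < t → f t ≤ C * (1 + t) ^ (1 / (1 - (τ + ε))) :=
  power_growth_of_tau_lt_one_general f f' f'' τ hfpos hf'pos hf hf' hτ ε hε hε1
end
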